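/- Let A be n×n symmetric positive semidefinite with partial Cholesky Πᵀ A Π = L Lᵀ + [[0,0],[0,S]]. Then trace(Πᵀ A Π − L Lᵀ) = trace(S) ≥ 0, and trace(S) ≥ Σ_{j=k+1}^{n} λ_j(A). -/

import Mathlib

/-!
Undoing the permutation, `A - Π L Lᵀ Πᵀ = Π [[0,0],[0,S]] Πᵀ` is positive semidefinite, so
`B = Π L Lᵀ Πᵀ` satisfies `0 ≤ B ≤ A`, `rank B ≤ k` and `trace S = trace A - trace B`.
In an eigenbasis of `A`, with eigenvalues `dᵢ`, diagonalising `B` gives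
`trace B ≤ ∑ dᵢ qᵢ`, where `qᵢ` is the squared length of the projection of the `i`-th
eigenvector of `A` onto the range of `B`. Thus `0 ≤ qᵢ ≤ 1` and `∑ qᵢ = rank B ≤ k`, and such a
weighted sum is at most the sum of the `k` largest eigenvalues; the remaining `m` eigenvalues
then sum to at most `trace A - trace B = trace S`.
-/

open Matrix

/-- The `j`-th largest eigenvalue (0-based index `j`) of a Hermitian matrix. -/
noncomputable def eigDesc {n : ℕ} {A : Matrix (Fin n) (Fin n) ℝ} (hA : A.IsHermitian)
    (j : Fin n) : ℝ :=
  (hA.eigenvalues ∘ Tuple.sort hA.eigenvalues) j.rev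

/-- The spectral norm (largest singular value) of a real matrix. -/
noncomputable def specNorm {m n : ℕ} (X : Matrix (Fin m) (Fin n) ℝ) : ℝ :=
  Real.sqrt (⨆ j, (by simpa using Matrix.isHermitian_conjTranspose_mul_self X : (Xᵀ * X).IsHermitian).eigenvalues j)

/-- The `j`-th largest singular value (0-based index `j`) of a real matrix. -/
noncomputable def sval {m k : ℕ} (X : Matrix (Fin m) (Fin k) ℝ) (j : Fin k) : ℝ :=
  Real.sqrt (eigDesc (by simpa using Matrix.isHermitian_conjTranspose_mul_self X : (Xᵀ * X).IsHermitian) j)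

open Finset

namespace Matrix

section Blocks

variable {R : Type*} {l m n : Type*} [Fintype l] [Fintype m] [Fintype n]

theorem trace_reindex_self [AddCommMonoid R] (e : m ≃ n) (M : Matrix m m R) :
    (reindex e e M).trace = M.trace := by
  simp only [trace, diag, reindex_apply, submatrix_apply]
  exact e.symm.sum_comp fun i ↦ M i i

theorem trace_fromBlocks [AddCommMonoid R] (A : Matrix l l R) (B : Matrix l m R)
    (C : Matrix m l R) (D : Matrix m m R) : (fromBlocks A B C D).trace = A.trace + D.trace := by
  simp [trace, Fintype.sum_sum_type]

theorem PosSemidef.fromBlocks_zero_zero_zero [CommRing R] [PartialOrder R] [StarRing R]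
    [DecidableEq m] {S : Matrix m m R} (hS : S.PosSemidef) :
    (fromBlocks (0 : Matrix l l R) 0 0 S).PosSemidef := by
  have := hS.conjTranspose_mul_mul_same (fromCols (0 : Matrix m l R) (1 : Matrix m m R))
  rw [conjTranspose_fromCols_eq_fromRows_conjTranspose, fromRows_mul, fromRows_mul_fromCols]
    at this
  simpa using this

end Blocks

theorem transpose_permMatrix_mul_self {R n : Type*} [NonAssocSemiring R] [Fintype n]
    [DecidableEq n] (σ : Equiv.Perm n) :
    (σ.permMatrix R)ᵀ * σ.permMatrix R = 1 := by
  rw [transpose_permMatrix, ← permMatrix_mul, mul_inv_cancel, permMatrix_one]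

end Matrix

section Diagonal

variable {n : Type*} [Fintype n] [DecidableEq n]

theorem Matrix.IsHermitian.exists_trace_le_sum_mul_of_posSemidef_diagonal_sub
    {B : Matrix n n ℝ} (hB : B.IsHermitian) {d : n → ℝ} (hBd : (diagonal d - B).PosSemidef) :
    ∃ q : n → ℝ, (∀ i, 0 ≤ q i ∧ q i ≤ 1) ∧ ∑ i, q i = B.rank ∧
      B.trace ≤ ∑ i, d i * q i := by
  set W : Matrix n n ℝ := (hB.eigenvectorUnitary : Matrix n n ℝ)
  set T := univ.filter (hB.eigenvalues · ≠ 0)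
  have hWstarW : star W * W = 1 := Unitary.coe_star_mul_self _
  have hWWstar : W * star W = 1 := Unitary.coe_mul_star_self _
  have hdiag : star W * B * W = diagonal hB.eigenvalues := by
    simpa using hB.conjStarAlgAut_star_eigenvectorUnitary
  have heig_le (a : n) : hB.eigenvalues a ≤ ∑ i, d i * W i a ^ 2 := by
    have := (hBd.conjTranspose_mul_mul_same W).diag_nonneg (i := a)
    rw [Matrix.mul_sub, Matrix.sub_mul, ← star_eq_conjTranspose, hdiag, sub_apply,
      diagonal_apply_eq, mul_apply] at this
    simpa [mul_diagonal, sq, mul_comm, mul_left_comm] using this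
  -- `∑ a ∈ T, W i a ^ 2` is the squared length of the projection of `eᵢ` onto the range of `B`.
  refine ⟨fun i ↦ ∑ a ∈ T, W i a ^ 2, fun i ↦ ⟨sum_nonneg fun a _ ↦ sq_nonneg _, ?_⟩, ?_, ?_⟩
  · calc ∑ a ∈ T, W i a ^ 2 ≤ ∑ a, W i a ^ 2 :=
          sum_le_univ_sum_of_nonneg fun a ↦ sq_nonneg _
      _ = (W * star W) i i := by simp [mul_apply, sq]
      _ = 1 := by simp [hWWstar]
  · rw [sum_comm, hB.rank_eq_card_non_zero_eigs, Fintype.card_subtype, card_eq_sum_ones,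
      Nat.cast_sum, Nat.cast_one]
    refine sum_congr rfl fun a _ ↦ ?_
    calc ∑ i, W i a ^ 2 = (star W * W) a a := by simp [mul_apply, sq]
      _ = 1 := by simp [hWstarW]
  · calc B.trace = ∑ a ∈ T, hB.eigenvalues a := by
          rw [sum_filter_ne_zero]; simpa using hB.trace_eq_sum_eigenvalues
      _ ≤ ∑ a ∈ T, ∑ i, d i * W i a ^ 2 := sum_le_sum fun a _ ↦ heig_le a
      _ = ∑ i, d i * ∑ a ∈ T, W i a ^ 2 := by
          rw [sum_comm]; simp only [mul_sum]

end Diagonal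

section Rearrangement

variable {k m : ℕ} {μ q : Fin (k + m) → ℝ}

theorem sum_mul_le_sum_castAdd_of_threshold {t : ℝ} (ht : 0 ≤ t)
    (hhead : ∀ j : Fin k, t ≤ μ (Fin.castAdd m j)) (htail : ∀ j : Fin m, μ (Fin.natAdd k j) ≤ t)
    (hq : ∀ i, 0 ≤ q i ∧ q i ≤ 1) (hqk : ∑ i, q i ≤ k) :
    ∑ i, μ i * q i ≤ ∑ j : Fin k, μ (Fin.castAdd m j) := by
  have hhead' (j : Fin k) : μ (Fin.castAdd m j) * q (Fin.castAdd m j) ≤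
      t * q (Fin.castAdd m j) + (μ (Fin.castAdd m j) - t) := by
    nlinarith [hq (Fin.castAdd m j), hhead j]
  have htail' (j : Fin m) : μ (Fin.natAdd k j) * q (Fin.natAdd k j) ≤ t * q (Fin.natAdd k j) :=
    mul_le_mul_of_nonneg_right (htail j) (hq _).1
  calc ∑ i, μ i * q i
      ≤ ∑ j : Fin k, (t * q (Fin.castAdd m j) + (μ (Fin.castAdd m j) - t)) +
          ∑ j : Fin m, t * q (Fin.natAdd k j) := by
        rw [Fin.sum_univ_add]
        exact add_le_add (sum_le_sum fun j _ ↦ hhead' j) (sum_le_sum fun j _ ↦ htail' j)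
    _ = ∑ j : Fin k, μ (Fin.castAdd m j) + t * (∑ i, q i - k) := by
        rw [Fin.sum_univ_add q]
        simp only [sum_add_distrib, sum_sub_distrib, ← mul_sum, sum_const, card_univ,
          Fintype.card_fin, nsmul_eq_mul]
        ring
    _ ≤ ∑ j : Fin k, μ (Fin.castAdd m j) := by nlinarith

theorem sum_mul_le_sum_castAdd_of_antitone (hμ : Antitone μ) (hμ0 : 0 ≤ μ)
    (hq : ∀ i, 0 ≤ q i ∧ q i ≤ 1) (hqk : ∑ i, q i ≤ k) :
    ∑ i, μ i * q i ≤ ∑ j : Fin k, μ (Fin.castAdd m j) := by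
  cases k with
  | zero =>
    have hq0 : ∀ i, q i = 0 := fun i ↦ (sum_eq_zero_iff_of_nonneg fun i _ ↦ (hq i).1).1
      (le_antisymm (by simpa using hqk) (sum_nonneg fun i _ ↦ (hq i).1)) i (mem_univ i)
    simp [hq0]
  | succ k =>
    refine sum_mul_le_sum_castAdd_of_threshold (hμ0 _) (fun j ↦ hμ ?_) (fun j ↦ hμ ?_) hq hqk
      (t := μ (Fin.castAdd m (Fin.last k)))
    · simpa [Fin.le_def] using Fin.is_le j
    · simp only [Fin.le_def, Fin.val_castAdd, Fin.val_last, Fin.val_natAdd]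
      omega

end Rearrangement

section Spectrum

variable {n : ℕ} {A : Matrix (Fin n) (Fin n) ℝ}

theorem exists_eigDesc_eq_eigenvalues_comp (hA : A.IsHermitian) :
    ∃ e : Equiv.Perm (Fin n), eigDesc hA = hA.eigenvalues ∘ e :=
  ⟨Fin.revPerm.trans (Tuple.sort hA.eigenvalues), rfl⟩

theorem eigDesc_antitone (hA : A.IsHermitian) : Antitone (eigDesc hA) :=
  fun _ _ hij ↦ Tuple.monotone_sort _ (Fin.rev_le_rev.mpr hij)

theorem trace_eq_sum_eigDesc (hA : A.IsHermitian) : A.trace = ∑ j, eigDesc hA j := by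
  obtain ⟨e, he⟩ := exists_eigDesc_eq_eigenvalues_comp hA
  rw [he]
  simpa [Equiv.sum_comp] using hA.trace_eq_sum_eigenvalues

end Spectrum

section KyFan

variable {k m : ℕ} {A B : Matrix (Fin (k + m)) (Fin (k + m)) ℝ}

theorem trace_le_sum_eigDesc_castAdd (hA : A.PosSemidef) (hB : B.IsHermitian)
    (hAB : (A - B).PosSemidef) (hrank : B.rank ≤ k) :
    B.trace ≤ ∑ j : Fin k, eigDesc hA.isHermitian (Fin.castAdd m j) := by
  set U : Matrix (Fin (k + m)) (Fin (k + m)) ℝ :=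
    (hA.isHermitian.eigenvectorUnitary : Matrix (Fin (k + m)) (Fin (k + m)) ℝ)
  set B' := star U * B * U
  have hUA : star U * A * U = diagonal hA.isHermitian.eigenvalues := by
    simpa using hA.isHermitian.conjStarAlgAut_star_eigenvectorUnitary
  have hB' : B'.IsHermitian := isHermitian_conjTranspose_mul_mul U hB
  have hdiff : (diagonal hA.isHermitian.eigenvalues - B').PosSemidef := by
    rw [← hUA, ← Matrix.sub_mul, ← Matrix.mul_sub]
    exact hAB.conjTranspose_mul_mul_same U
  have htrace : B'.trace = B.trace := by
    rw [trace_mul_cycle, show U * star U = 1 from Unitary.coe_mul_star_self _, Matrix.one_mul]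
  have hrank' : B'.rank ≤ k := ((rank_mul_le_left _ _).trans (rank_mul_le_right _ _)).trans hrank
  obtain ⟨q, hq, hqsum, hqtrace⟩ := hB'.exists_trace_le_sum_mul_of_posSemidef_diagonal_sub hdiff
  obtain ⟨e, he⟩ := exists_eigDesc_eq_eigenvalues_comp hA.isHermitian
  calc B.trace ≤ ∑ i, hA.isHermitian.eigenvalues i * q i := htrace ▸ hqtrace
    _ = ∑ j, eigDesc hA.isHermitian j * q (e j) := by
        rw [he, ← Equiv.sum_comp e]; rfl
    _ ≤ ∑ j : Fin k, eigDesc hA.isHermitian (Fin.castAdd m j) := by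
        refine sum_mul_le_sum_castAdd_of_antitone (eigDesc_antitone _) ?_ (fun j ↦ hq (e j)) ?_
        · rw [he]; exact fun j ↦ hA.eigenvalues_nonneg (e j)
        · rw [Equiv.sum_comp e q, hqsum]; exact_mod_cast hrank'

theorem sum_eigDesc_natAdd_le_trace_sub (hA : A.PosSemidef) (hB : B.IsHermitian)
    (hAB : (A - B).PosSemidef) (hrank : B.rank ≤ k) :
    ∑ j : Fin m, eigDesc hA.isHermitian (Fin.natAdd k j) ≤ (A - B).trace := by
  have := trace_le_sum_eigDesc_castAdd hA hB hAB hrank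
  rw [trace_sub, trace_eq_sum_eigDesc hA.isHermitian, Fin.sum_univ_add]
  linarith

theorem sum_eigDesc_natAdd_le_trace_transpose_mul_mul_sub (hA : A.PosSemidef)
    {P : Matrix (Fin (k + m)) (Fin (k + m)) ℝ} (hP : Pᵀ * P = 1)
    {L : Matrix (Fin (k + m)) (Fin k) ℝ} (hR : (Pᵀ * A * P - L * Lᵀ).PosSemidef) :
    ∑ j : Fin m, eigDesc hA.isHermitian (Fin.natAdd k j) ≤ (Pᵀ * A * P - L * Lᵀ).trace := by
  have hPPt : P * Pᵀ = 1 := mul_eq_one_comm.mp hP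
  have hdeflate : A - P * (L * Lᵀ) * Pᵀ = P * (Pᵀ * A * P - L * Lᵀ) * Pᵀ := by
    simp only [Matrix.mul_sub, Matrix.sub_mul, Matrix.mul_assoc]
    rw [hPPt, Matrix.mul_one, ← Matrix.mul_assoc P Pᵀ A, hPPt, Matrix.one_mul]
  have hpsd : (A - P * (L * Lᵀ) * Pᵀ).PosSemidef := by
    rw [hdeflate, ← conjTranspose_eq_transpose_of_trivial]
    exact hR.mul_mul_conjTranspose_same P
  have hherm : (P * (L * Lᵀ) * Pᵀ).IsHermitian := by
    simpa [conjTranspose_eq_transpose_of_trivial] using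
      isHermitian_mul_mul_conjTranspose P (isHermitian_mul_conjTranspose_self L)
  have hrank : (P * (L * Lᵀ) * Pᵀ).rank ≤ k :=
    (rank_mul_le_left _ _).trans <| (rank_mul_le_right _ _).trans <|
      (rank_mul_le_left _ _).trans (rank_le_width L)
  calc ∑ j : Fin m, eigDesc hA.isHermitian (Fin.natAdd k j)
      ≤ (A - P * (L * Lᵀ) * Pᵀ).trace := sum_eigDesc_natAdd_le_trace_sub hA hherm hpsd hrank
    _ = (Pᵀ * A * P - L * Lᵀ).trace := by rw [hdeflate, trace_mul_cycle, hP, Matrix.one_mul]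

end KyFan

/-- For a partial Cholesky `Πᵀ A Π = L Lᵀ + [[0,0],[0,S]]` of a symmetric
positive semidefinite `A`: `trace(Πᵀ A Π − L Lᵀ) = trace S ≥ 0`, and
`trace S ≥ Σ_{j=k+1}^{n} λ_j(A)`. -/
theorem partial_cholesky_trace_bounds {k m : ℕ}
    (A : Matrix (Fin (k + m)) (Fin (k + m)) ℝ) (hA : A.PosSemidef)
    (σ : Equiv.Perm (Fin (k + m)))
    (L : Matrix (Fin (k + m)) (Fin k) ℝ)
    (S : Matrix (Fin m) (Fin m) ℝ) (hS : S.PosSemidef)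
    (hfact : (σ.permMatrix ℝ)ᵀ * A * σ.permMatrix ℝ =
      L * Lᵀ + (Matrix.reindex finSumFinEquiv finSumFinEquiv) (Matrix.fromBlocks 0 0 0 S)) :
    ((σ.permMatrix ℝ)ᵀ * A * σ.permMatrix ℝ - L * Lᵀ).trace = S.trace ∧
    0 ≤ S.trace ∧
    ∑ j : Fin m, eigDesc hA.isHermitian (Fin.natAdd k j) ≤ S.trace := by
  have hR : (σ.permMatrix ℝ)ᵀ * A * σ.permMatrix ℝ - L * Lᵀ =
      reindex finSumFinEquiv finSumFinEquiv (fromBlocks 0 0 0 S) := by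
    rw [hfact, add_sub_cancel_left]
  have htrace : ((σ.permMatrix ℝ)ᵀ * A * σ.permMatrix ℝ - L * Lᵀ).trace = S.trace := by
    rw [hR, trace_reindex_self, trace_fromBlocks, trace_zero, zero_add]
  have hRpsd : ((σ.permMatrix ℝ)ᵀ * A * σ.permMatrix ℝ - L * Lᵀ).PosSemidef := by
    rw [hR, reindex_apply]
    exact hS.fromBlocks_zero_zero_zero.submatrix _
  exact ⟨htrace, hS.trace_nonneg, htrace ▸
    sum_eigDesc_natAdd_le_trace_transpose_mul_mul_sub hA (transpose_permMatrix_mul_self σ) hRpsd⟩
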